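/- Table compatibility is upward closed under table subtyping in each argument: for all schemas σ₁, σ₂, σ₁', σ₂', if Table(σ₁') <: Table(σ₁), Table(σ₂') <: Table(σ₂), and Table(σ₁') ~ Table(σ₂'), then Table(σ₁) ~ Table(σ₂). Consequently, if a goal table type is incompatible with a type τ, it is also incompatible with every subtype of τ. -/

import Mathlib

/-- Column types in the refinement type system. -/
inductive ColTy where
  | top | quantitative | qualitative | discrete | continuous
  | nominal | ordinal | temporal
deriving DecidableEq

/-- The subtyping axioms on column types. -/
inductive ColSubAx : ColTy → ColTy → Prop where
  | quant_top : ColSubAx .quantitative .top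
  | qual_top  : ColSubAx .qualitative .top
  | disc_quant : ColSubAx .discrete .quantitative
  | cont_quant : ColSubAx .continuous .quantitative
  | nom_qual  : ColSubAx .nominal .qualitative
  | ord_qual  : ColSubAx .ordinal .qualitative
  | temp_qual : ColSubAx .temporal .qualitative

/-- Column subtyping: the reflexive-transitive closure of the axioms. -/
def ColSub : ColTy → ColTy → Prop := Relation.ReflTransGen ColSubAx

/-- Two column types are compatible iff one is a subtype of the other. -/
def ColCompat (β₁ β₂ : ColTy) : Prop := ColSub β₁ β₂ ∨ ColSub β₂ β₁

/-- A schema is a finite partial map from column names to column types. -/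
abbrev Schema := Finmap (fun _ : String => ColTy)

/-- Table subtyping (a table type `Table σ` is determined by its schema `σ`;
    since `Finmap` is quotiented by permutation, the permutation rule is implicit). -/
inductive TableSub : Schema → Schema → Prop where
  | width (σ₁ σ₂ : Schema) :
      (∀ c τ, σ₂.lookup c = some τ → σ₁.lookup c = some τ) → TableSub σ₁ σ₂
  | depth (σ₁ σ₂ : Schema) :
      σ₁.keys = σ₂.keys →
      (∀ c τ₁ τ₂, σ₁.lookup c = some τ₁ → σ₂.lookup c = some τ₂ → ColSub τ₁ τ₂) →
      TableSub σ₁ σ₂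
  | trans {σ₁ σ₂ σ₃ : Schema} : TableSub σ₁ σ₂ → TableSub σ₂ σ₃ → TableSub σ₁ σ₃

/-- Table compatibility: every shared column's types are compatible. -/
def TableCompat (σ₁ σ₂ : Schema) : Prop :=
  ∀ c τ₁ τ₂, σ₁.lookup c = some τ₁ → σ₂.lookup c = some τ₂ → ColCompat τ₁ τ₂

/-!
Every column type has at most one immediate supertype, so the supertypes of any column type
form a chain. Hence two column types lying above a common subtype are compatible, which makes
column compatibility upward closed. A table subtype assigns to each column of its supertype a
column subtype, so table compatibility is upward closed column by column.
-/

theorem colSubAx_rightUnique : Relator.RightUnique ColSubAx := by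
  intro a b c hab hac
  cases hab <;> cases hac <;> rfl

theorem ColSub.trans {a b c : ColTy} (hab : ColSub a b) (hbc : ColSub b c) : ColSub a c :=
  Relation.ReflTransGen.trans hab hbc

theorem colCompat_of_colSub_of_colSub {a b : ColTy} (c : ColTy) (hca : ColSub c a)
    (hcb : ColSub c b) : ColCompat a b :=
  Relation.ReflTransGen.total_of_right_unique colSubAx_rightUnique hca hcb

theorem ColCompat.mono {a a' b b' : ColTy} (ha : ColSub a' a) (hb : ColSub b' b)
    (h : ColCompat a' b') : ColCompat a b := by
  rcases h with h | h
  · exact colCompat_of_colSub_of_colSub a' ha (h.trans hb)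
  · exact colCompat_of_colSub_of_colSub b' (h.trans ha) hb

theorem TableSub.refl (σ : Schema) : TableSub σ σ :=
  .width σ σ fun _ _ h => h

theorem TableSub.exists_lookup {σ' σ : Schema} (h : TableSub σ' σ) {c : String} {τ : ColTy}
    (hc : σ.lookup c = some τ) : ∃ τ', σ'.lookup c = some τ' ∧ ColSub τ' τ := by
  induction h generalizing τ with
  | width σ₁ σ₂ hw => exact ⟨τ, hw c τ hc, .refl⟩
  | depth σ₁ σ₂ hkeys hsub =>
    have hc₁ : c ∈ σ₁ := by
      rw [← Finmap.mem_keys, hkeys, Finmap.mem_keys]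
      exact Finmap.mem_of_lookup_eq_some hc
    obtain ⟨τ', hτ'⟩ := Finmap.mem_iff.mp hc₁
    exact ⟨τ', hτ', hsub c τ' τ hτ' hc⟩
  | trans _ _ ih₁₂ ih₂₃ =>
    obtain ⟨τ₂, hτ₂, hsub₂₃⟩ := ih₂₃ hc
    obtain ⟨τ₁, hτ₁, hsub₁₂⟩ := ih₁₂ hτ₂
    exact ⟨τ₁, hτ₁, hsub₁₂.trans hsub₂₃⟩

theorem TableCompat.mono {σ₁ σ₂ σ₁' σ₂' : Schema} (h₁ : TableSub σ₁' σ₁)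
    (h₂ : TableSub σ₂' σ₂) (h : TableCompat σ₁' σ₂') : TableCompat σ₁ σ₂ := by
  intro c τ₁ τ₂ hτ₁ hτ₂
  obtain ⟨τ₁', hτ₁', hsub₁⟩ := h₁.exists_lookup hτ₁
  obtain ⟨τ₂', hτ₂', hsub₂⟩ := h₂.exists_lookup hτ₂
  exact ColCompat.mono hsub₁ hsub₂ (h c τ₁' τ₂' hτ₁' hτ₂')

/-- Table compatibility is upward closed under table subtyping in each argument;
    consequently incompatibility with a type propagates to all its subtypes. -/
theorem tableCompat_upward_closed :
    (∀ σ₁ σ₂ σ₁' σ₂' : Schema,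
      TableSub σ₁' σ₁ → TableSub σ₂' σ₂ → TableCompat σ₁' σ₂' → TableCompat σ₁ σ₂) ∧
    (∀ σg τ τ' : Schema,
      ¬ TableCompat σg τ → TableSub τ' τ → ¬ TableCompat σg τ') :=
  ⟨fun _ _ _ _ h₁ h₂ h => h.mono h₁ h₂,
    fun σg _ _ hincompat hsub h => hincompat (h.mono (.refl σg) hsub)⟩
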